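/- If A ⊆ ℕ is a multiplicatively net-normal set, then for every natural number k there exist a, b, c ∈ A such that a·b = c^k. -/

import Mathlib

/-!
Normality along the factorials yields, for every `D`, some `c` divisible by `D` with
`c, 2c, 4c ∈ A`. Iterating, such `c` form a divisibility chain `c₀ ∣ c₁ ∣ ⋯` that eventually
absorbs every integer, so `Lₙ = cₙ ^ k` is a nice Følner sequence. Along it, the divisors `m` of
`Lₙ` with `m ∈ A` or `2ᵏ m ∈ A` have density `3/4 > 1/2`, so the involution `m ↦ Lₙ / m` sends
one of them to another. Writing the two as `2^(ik) m, 2^(jk) m' ∈ A` with `m m' = Lₙ`, their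
product is `(2^(i+j) cₙ) ^ k`, and `2^(i+j) cₙ ∈ A` since `i + j ≤ 2`.
-/

open Filter

def MulFolner (F : ℕ → Finset ℕ) : Prop :=
  (∀ n, (F n).Nonempty) ∧ (∀ n, 0 ∉ F n) ∧
  ∀ k : ℕ, 0 < k → Tendsto
    (fun n => (((F n).filter (fun m => k * m ∈ F n)).card : ℝ) / (F n).card)
    atTop (nhds 1)

def NiceFolner (F : ℕ → Finset ℕ) : Prop :=
  ∃ L : ℕ → ℕ, (∀ n, 0 < L n) ∧ (∀ n, L n ∣ L (n + 1)) ∧ (∀ n, L n ≠ L (n + 1)) ∧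
    (∀ m : ℕ, 0 < m → ∀ᶠ n in atTop, m ∣ L n) ∧ (∀ n, F n = (L n).divisors)

open scoped Classical in
def MulNormalSet (F : ℕ → Finset ℕ) (A : Set ℕ) : Prop :=
  ∀ K : Finset ℕ, K.Nonempty → (∀ k ∈ K, 0 < k) → ∀ B : ℕ → Bool,
    Tendsto
      (fun n =>
        (((F n).filter (fun m => ∀ k ∈ K, (k * m ∈ A ↔ B k = true))).card : ℝ) / (F n).card)
      atTop (nhds ((1 / 2 : ℝ) ^ K.card))

open Nat

lemma niceFolner_divisors {L : ℕ → ℕ} (hpos : ∀ n, 0 < L n) (hdvd : ∀ n, L n ∣ L (n + 1))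
    (hmono : StrictMono L) (hfac : ∀ n, n ! ∣ L n) :
    NiceFolner fun n => (L n).divisors := by
  refine ⟨L, hpos, hdvd, fun n => (hmono n.lt_succ_self).ne, fun m hm => ?_, fun n => rfl⟩
  filter_upwards [eventually_ge_atTop m] with n hn
  exact (Nat.dvd_factorial hm hn).trans (hfac n)

lemma niceFolner_divisors_factorial : NiceFolner fun n => (n + 1)!.divisors :=
  niceFolner_divisors (fun _ => factorial_pos _) (fun n => factorial_dvd_factorial (n + 1).le_succ)
    (strictMono_nat_of_lt_succ fun n => (factorial_lt n.succ_pos).mpr (n + 1).lt_succ_self)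
    (fun n => factorial_dvd_factorial n.le_succ)

lemma exists_strictMono_dvd_chain {P : ℕ → Prop} (h : ∀ D, ∃ c, 0 < c ∧ D ! ∣ c ∧ P c) :
    ∃ c : ℕ → ℕ, (∀ n, 0 < c n ∧ P (c n)) ∧ (∀ n, c n ∣ c (n + 1)) ∧ StrictMono c ∧
      ∀ n, n ! ∣ c n := by
  choose g hgpos hgdvd hgP using h
  let c : ℕ → ℕ := fun n => Nat.rec (g 0) (fun n cn => g (cn + n + 1)) n
  have hc : ∀ n, c (n + 1) = g (c n + n + 1) := fun n => rfl
  have hpos : ∀ n, 0 < c n := fun n => by cases n <;> apply hgpos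
  have hstep : ∀ n, (c n + n + 1)! ∣ c (n + 1) := fun n => hc n ▸ hgdvd _
  refine ⟨c, fun n => ⟨hpos n, by cases n <;> apply hgP⟩,
    fun n => (Nat.dvd_factorial (hpos n) (by omega)).trans (hstep n),
    strictMono_nat_of_lt_succ fun n => ?_, fun n => ?_⟩
  · calc c n < c n + n + 1 := by omega
      _ ≤ (c n + n + 1)! := self_le_factorial _
      _ ≤ c (n + 1) := Nat.le_of_dvd (hpos (n + 1)) (hstep n)
  · cases n with
    | zero => simp
    | succ n => exact (factorial_dvd_factorial (by omega)).trans (hstep n)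

namespace MulNormalSet

variable {F : ℕ → Finset ℕ} {A : Set ℕ} {K : Finset ℕ}

open scoped Classical in
lemma exists_mem_forall_mem_iff (hA : MulNormalSet F A) (hK : K.Nonempty)
    (hKpos : ∀ k ∈ K, 0 < k) (B : ℕ → Bool) :
    ∃ n, ∃ m ∈ F n, ∀ k ∈ K, (k * m ∈ A ↔ B k = true) := by
  obtain ⟨n, hn⟩ := ((hA K hK hKpos B).eventually_const_lt (by positivity)).exists
  have hcard := (div_pos_iff.mp hn).resolve_right fun h => h.1.not_ge (by positivity)
  obtain ⟨m, hm⟩ := Finset.card_pos.mp (Nat.cast_pos.mp hcard.1)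
  exact ⟨n, m, (Finset.mem_filter.mp hm).1, (Finset.mem_filter.mp hm).2⟩

lemma exists_dvd_forall_two_pow_mul_mem (hA : MulNormalSet F A) (hF : ∀ n, ∀ m ∈ F n, 0 < m)
    {D : ℕ} (hD : 0 < D) : ∃ c, 0 < c ∧ D ∣ c ∧ ∀ i ≤ 2, 2 ^ i * c ∈ A := by
  obtain ⟨n, m, hm, hmA⟩ := hA.exists_mem_forall_mem_iff
    (K := (Finset.range 3).image (2 ^ · * D)) (by simp) (by simp [hD]) fun _ => true
  refine ⟨D * m, Nat.mul_pos hD (hF n m hm), dvd_mul_right _ _, fun i hi => ?_⟩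
  simpa [mul_assoc] using hmA (2 ^ i * D) (Finset.mem_image_of_mem _ (by simp; omega))

open scoped Classical in
lemma eventually_card_lt_two_mul_card_filter_exists (hA : MulNormalSet F A)
    (hF : ∀ n, (F n).Nonempty) (hK : 1 < K.card) (hKpos : ∀ k ∈ K, 0 < k) :
    ∀ᶠ n in atTop, (F n).card < 2 * ((F n).filter fun m => ∃ k ∈ K, k * m ∈ A).card := by
  have hlim := hA K (Finset.card_pos.mp (by omega)) hKpos fun _ => false
  have hquarter : (1 / 2 : ℝ) ^ K.card < 1 / 2 :=
    pow_lt_self_of_lt_one₀ (by norm_num) (by norm_num) hK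
  filter_upwards [hlim.eventually_lt_const hquarter] with n hn
  rw [div_lt_iff₀ (by exact_mod_cast (hF n).card_pos)] at hn
  set avoid := fun m => ∀ k ∈ K, (k * m ∈ A ↔ false = true)
  have hsplit := Finset.card_filter_add_card_filter_not (s := F n) avoid
  rw [Finset.filter_congr fun m _ => show ¬ avoid m ↔ ∃ k ∈ K, k * m ∈ A by simp [avoid]]
    at hsplit
  have hsmall : 2 * ((F n).filter avoid).card < (F n).card := by
    have : (2 * ((F n).filter avoid).card : ℝ) < (F n).card := by linarith
    exact_mod_cast this
  omega

end MulNormalSet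

lemma Nat.exists_mul_eq_of_card_divisors_lt_two_mul {L : ℕ} (hL : L ≠ 0) {S : Finset ℕ}
    (hS : S ⊆ L.divisors) (hcard : L.divisors.card < 2 * S.card) :
    ∃ a ∈ S, ∃ b ∈ S, a * b = L := by
  have hdvd : ∀ b ∈ S, b ∣ L := fun b hb => Nat.dvd_of_mem_divisors (hS hb)
  have himage : S.image (L / ·) ⊆ L.divisors := by
    simpa [Finset.image_subset_iff, hL] using fun b hb => Nat.div_dvd_of_dvd (hdvd b hb)
  have hinj : Set.InjOn (L / ·) S := fun a ha b hb hab => by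
    rw [← Nat.div_div_self (hdvd a ha) hL, ← Nat.div_div_self (hdvd b hb) hL]
    exact congrArg (L / ·) hab
  obtain ⟨a, ha⟩ := Finset.inter_nonempty_of_card_lt_card_add_card hS himage
    (by rw [Finset.card_image_of_injOn hinj]; omega)
  obtain ⟨haS, ha⟩ := Finset.mem_inter.mp ha
  obtain ⟨b, hbS, rfl⟩ := Finset.mem_image.mp ha
  exact ⟨_, haS, b, hbS, Nat.div_mul_cancel (hdvd b hbS)⟩

lemma exists_mul_eq_pow_of_two_pow_mul_mem {A : Set ℕ} {k c m m' : ℕ}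
    (hc : ∀ i ≤ 2, 2 ^ i * c ∈ A) (hm : ∃ j ∈ ({1, 2 ^ k} : Finset ℕ), j * m ∈ A)
    (hm' : ∃ j ∈ ({1, 2 ^ k} : Finset ℕ), j * m' ∈ A) (h : m * m' = c ^ k) :
    ∃ a ∈ A, ∃ b ∈ A, ∃ c ∈ A, a * b = c ^ k := by
  have hexp : ∀ x, (∃ j ∈ ({1, 2 ^ k} : Finset ℕ), j * x ∈ A) → ∃ i ≤ 1, (2 ^ i) ^ k * x ∈ A := by
    rintro x ⟨j, hj, hjA⟩
    rcases Finset.mem_insert.mp hj with rfl | hj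
    · exact ⟨0, zero_le_one, by simpa using hjA⟩
    · exact ⟨1, le_rfl, by simpa [Finset.mem_singleton.mp hj] using hjA⟩
  obtain ⟨i, hi, hiA⟩ := hexp m hm
  obtain ⟨j, hj, hjA⟩ := hexp m' hm'
  refine ⟨_, hiA, _, hjA, _, hc (i + j) (by omega), ?_⟩
  rw [mul_pow, pow_add, mul_pow, ← h]
  ring

/-- If `A ⊆ ℕ` is multiplicatively net-normal (i.e. `(F n)`-normal in `(ℕ,×)` for
every nice Følner sequence `(F n)`), then for every natural number `k ≥ 1` there are
`a, b, c ∈ A` with `a * b = c ^ k`. -/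
theorem net_normal_solves_ab_eq_ck
    (A : Set ℕ) (hA : ∀ F : ℕ → Finset ℕ, NiceFolner F → MulNormalSet F A)
    (k : ℕ) (hk : 0 < k) :
    ∃ a ∈ A, ∃ b ∈ A, ∃ c ∈ A, a * b = c ^ k := by
  classical
  obtain ⟨c, hcA, hcdvd, hcmono, hcfac⟩ := exists_strictMono_dvd_chain fun D =>
    (hA _ niceFolner_divisors_factorial).exists_dvd_forall_two_pow_mul_mem
      (fun _ _ => Nat.pos_of_mem_divisors) D.factorial_pos
  have hLpos : ∀ n, 0 < c n ^ k := fun n => pow_pos (hcA n).1 k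
  have hnice : NiceFolner fun n => (c n ^ k).divisors :=
    niceFolner_divisors hLpos (fun n => pow_dvd_pow_of_dvd (hcdvd n) k)
      ((Nat.pow_left_strictMono hk.ne').comp hcmono)
      (fun n => (hcfac n).trans (dvd_pow_self _ hk.ne'))
  have hK : ({1, 2 ^ k} : Finset ℕ).card = 2 :=
    Finset.card_pair (Nat.one_lt_two_pow hk.ne').ne
  obtain ⟨n, hn⟩ := ((hA _ hnice).eventually_card_lt_two_mul_card_filter_exists
    (fun n => Nat.nonempty_divisors.mpr (hLpos n).ne') (hK ▸ one_lt_two) (by simp)).exists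
  obtain ⟨m, hm, m', hm', hmm'⟩ :=
    Nat.exists_mul_eq_of_card_divisors_lt_two_mul (hLpos n).ne' (Finset.filter_subset _ _) hn
  exact exists_mul_eq_pow_of_two_pow_mul_mem (hcA n).2 (Finset.mem_filter.mp hm).2
    (Finset.mem_filter.mp hm').2 hmm'
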